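/- Let A, B be bounded positive operators on a complex Hilbert space H. Then A and B are mutually singular if and only if the parallel sum A : B is zero. -/

import Mathlib

open Filter

local notation "⟪" x ", " y "⟫" => @inner ℂ _ _ x y

variable {H : Type*} [NormedAddCommGroup H] [InnerProductSpace ℂ H] [CompleteSpace H]

/-- The quadratic-form order: `A ≤ B` iff `⟨Ax, x⟩ ≤ ⟨Bx, x⟩` for all `x`. -/
def QuadLE (A B : H →L[ℂ] H) : Prop :=
  ∀ x : H, (⟪A x, x⟫).re ≤ (⟪B x, x⟫).re

/-- `B` is absolutely continuous with respect to `A` (`B ≪ A`): for every sequence `(xₙ)`,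
if `⟨Axₙ, xₙ⟩ → 0` and `⟨B(xₙ−xₘ), xₙ−xₘ⟩ → 0` as `n, m → ∞`, then `⟨Bxₙ, xₙ⟩ → 0`. -/
def AbsCont (B A : H →L[ℂ] H) : Prop :=
  ∀ x : ℕ → H,
    Tendsto (fun n => (⟪A (x n), x n⟫).re) atTop (nhds 0) →
    (∀ ε > (0 : ℝ), ∃ N : ℕ, ∀ n ≥ N, ∀ m ≥ N,
      (⟪B (x n - x m), x n - x m⟫).re < ε) →
    Tendsto (fun n => (⟪B (x n), x n⟫).re) atTop (nhds 0)

/-- `A` and `B` are mutually singular (`A ⊥ B`): the only bounded positive operator `C` with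
`C ≤ A` and `C ≤ B` is `C = 0`. -/
def MutSing (A B : H →L[ℂ] H) : Prop :=
  ∀ C : H →L[ℂ] H, C.IsPositive → QuadLE C A → QuadLE C B → C = 0

/-!
If `C ≤ A` and `C ≤ B` with `C ≥ 0`, then for every splitting `x = (x - y) + y` the parallelogram
law gives `⟨Cx, x⟩ ≤ 2 (⟨A(x - y), x - y⟩ + ⟨By, y⟩)`, so `⟨Cx, x⟩ ≤ 2 ⟨(A : B)x, x⟩`; hence
`A : B = 0` forces `C = 0`. Conversely, the choices `y = 0` and `y = x` show `A : B ≤ A` and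
`A : B ≤ B`, so singularity forces `A : B = 0`.
-/

open RCLike in
theorem LinearMap.IsSymmetric.eq_zero_of_re_inner_self_eq_zero {𝕜 E : Type*} [RCLike 𝕜]
    [NormedAddCommGroup E] [InnerProductSpace 𝕜 E] {T : E →ₗ[𝕜] E} (hT : T.IsSymmetric)
    (h : ∀ x, re (inner 𝕜 (T x) x) = 0) : T = 0 :=
  hT.inner_map_self_eq_zero.mp fun x => by simpa [h x] using (hT.coe_re_inner_apply_self x).symm

namespace ContinuousLinearMap

open RCLike

variable {𝕜 E : Type*} [RCLike 𝕜] [NormedAddCommGroup E] [InnerProductSpace 𝕜 E]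

theorem IsPositive.re_inner_add_self_le {T : E →L[𝕜] E} (hT : T.IsPositive) (u v : E) :
    re (inner 𝕜 (T (u + v)) (u + v)) ≤
      2 * re (inner 𝕜 (T u) u) + 2 * re (inner 𝕜 (T v) v) := by
  have parallelogram : re (inner 𝕜 (T (u + v)) (u + v)) + re (inner 𝕜 (T (u - v)) (u - v)) =
      2 * re (inner 𝕜 (T u) u) + 2 * re (inner 𝕜 (T v) v) := by
    simp only [map_add, map_sub, inner_add_left, inner_add_right, inner_sub_left,
      inner_sub_right]
    ring
  linarith [hT.re_inner_nonneg_left (u - v)]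

noncomputable def parallelSumForm (A B : E →L[𝕜] E) (x : E) : ℝ :=
  ⨅ y, re (inner 𝕜 (A (x - y)) (x - y)) + re (inner 𝕜 (B y) y)

variable {A B : E →L[𝕜] E}

theorem bddBelow_parallelSumForm (hA : A.IsPositive) (hB : B.IsPositive) (x : E) :
    BddBelow (Set.range fun y => re (inner 𝕜 (A (x - y)) (x - y)) + re (inner 𝕜 (B y) y)) :=
  ⟨0, by
    rintro _ ⟨y, rfl⟩
    exact add_nonneg (hA.re_inner_nonneg_left _) (hB.re_inner_nonneg_left _)⟩

theorem parallelSumForm_le_left (hA : A.IsPositive) (hB : B.IsPositive) (x : E) :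
    parallelSumForm A B x ≤ re (inner 𝕜 (A x) x) := by
  refine (ciInf_le (bddBelow_parallelSumForm hA hB x) 0).trans_eq ?_
  simp

theorem parallelSumForm_le_right (hA : A.IsPositive) (hB : B.IsPositive) (x : E) :
    parallelSumForm A B x ≤ re (inner 𝕜 (B x) x) := by
  refine (ciInf_le (bddBelow_parallelSumForm hA hB x) x).trans_eq ?_
  simp

theorem IsPositive.re_inner_self_le_two_mul_parallelSumForm {C : E →L[𝕜] E} (hC : C.IsPositive)
    (hCA : ∀ x, re (inner 𝕜 (C x) x) ≤ re (inner 𝕜 (A x) x))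
    (hCB : ∀ x, re (inner 𝕜 (C x) x) ≤ re (inner 𝕜 (B x) x)) (x : E) :
    re (inner 𝕜 (C x) x) ≤ 2 * parallelSumForm A B x := by
  rw [← div_le_iff₀' two_pos]
  refine le_ciInf fun y => ?_
  have hsplit := hC.re_inner_add_self_le (x - y) y
  rw [sub_add_cancel] at hsplit
  linarith [hCA (x - y), hCB y]

end ContinuousLinearMap

open ContinuousLinearMap

/-- **Singularity and the parallel sum** (Theorem 6.1 (i) ⇔ (ii), Hilbert space case).
`A ⊥ B` iff the parallel sum `A : B` (characterized by its quadratic form) is zero. -/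
theorem stmt_13 (A B : H →L[ℂ] H) (hA : A.IsPositive) (hB : B.IsPositive)
    (P : H →L[ℂ] H) (hP : P.IsPositive)
    (hPform : ∀ x : H, (⟪P x, x⟫).re =
      ⨅ y : H, ((⟪A (x - y), x - y⟫).re + (⟪B y, y⟫).re)) :
    MutSing A B ↔ P = 0 := by
  change ∀ x, (⟪P x, x⟫).re = parallelSumForm A B x at hPform
  constructor
  · intro hsing
    exact hsing P hP (fun x => hPform x ▸ parallelSumForm_le_left hA hB x)
      (fun x => hPform x ▸ parallelSumForm_le_right hA hB x)
  · rintro rfl C hC hCA hCB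
    have hform_zero : ∀ x, parallelSumForm A B x = 0 := fun x => by simp [← hPform]
    refine coe_injective <| LinearMap.IsSymmetric.eq_zero_of_re_inner_self_eq_zero hC.isSymmetric
      fun x => le_antisymm ?_ (hC.re_inner_nonneg_left x)
    simpa [hform_zero] using hC.re_inner_self_le_two_mul_parallelSumForm hCA hCB x
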